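/- Let n ≥ 3 be odd and let Λ be a finite set. For each i ∈ ℤ/n let ξ_i : {0,1} × Λ → [0,1] satisfy ξ_i(0,λ) + ξ_i(1,λ) = 1 for all λ. For each i ∈ ℤ/n let ζ_i, ζ'_i : {0,1}² × Λ → [0,1] be joint response functions for the pair (M_i, M_{i+1}) that are normalized (Σ_{a,b∈{0,1}} ζ_i(a,b,λ) = 1) and satisfy the measurement-noncontextuality (marginal) conditions Σ_b ζ_i(a,b,λ) = ξ_i(a,λ), Σ_a ζ_i(a,b,λ) = ξ_{i+1}(b,λ) for all a, b, λ, and likewise for ζ'_i. Let μ_*, μ_*^⊥ and μ_i, μ_i^⊥ (i ∈ ℤ/n) be probability distributions on Λ satisfying the preparation-noncontextuality condition ½(μ_* + μ_*^⊥) = ½(μ_i + μ_i^⊥) for every i. Define p(anti | ζ, μ) := (1/n) Σ_{i∈ℤ/n} Σ_λ (ζ_i(0,1,λ) + ζ_i(1,0,λ)) μ(λ), η(ξ_i, μ) := 2·max_{a∈{0,1}} Σ_λ ξ_i(a,λ)μ(λ) − 1, and η_ave := (1/2n) Σ_{i∈ℤ/n} (η(ξ_i, μ_i) + η(ξ_i,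 μ_i^⊥)). Then p(anti | ζ, μ_*) + p(anti | ζ', μ_*^⊥) ≤ 2(1 − η_ave/n). (The operational noncontextuality inequality for odd n-cycle scenarios; the case n = 3 is the noncontextuality inequality for Specker's scenario.) -/

import Mathlib

open scoped BigOperators

/-- The average probability of anticorrelation `p(anti | M_*, P)` over the `n` cyclically
adjacent pairs, given joint response functions `ζ` and a preparation distribution `μ`
(outcome `0` is encoded by `false`, `1` by `true`). -/
noncomputable def pAnti (n : ℕ) [NeZero n] {Λ : Type*} [Fintype Λ]
    (ζ : ZMod n → Bool → Bool → Λ → ℝ) (μ : Λ → ℝ) : ℝ :=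
  (1 / (n : ℝ)) * ∑ i : ZMod n, ∑ l, (ζ i false true l + ζ i true false l) * μ l

/-- The ontological predictability `η(ξ, μ) = 2 max_a Σ_l ξ(a,l) μ(l) − 1` of a binary
response function `ξ` on the distribution `μ`. -/
noncomputable def predictability {Λ : Type*} [Fintype Λ]
    (ξ : Bool → Λ → ℝ) (μ : Λ → ℝ) : ℝ :=
  2 * max (∑ l, ξ false l * μ l) (∑ l, ξ true l * μ l) - 1

private lemma tele_aux (x : ℕ → ℝ) (m : ℕ) :
    ∑ j ∈ Finset.range m, (-1:ℝ)^j * (x j + x (j+1) - 1)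
      = x 0 - (-1:ℝ)^m * x m - (1 - (-1:ℝ)^m)/2 := by
  induction m with
  | zero => simp
  | succ m ih => rw [Finset.sum_range_succ, ih, pow_succ]; ring

private lemma zmod_sum_eq_range (n : ℕ) [NeZero n] (k : ZMod n) (g : ZMod n → ℝ) :
    ∑ j ∈ Finset.range n, g (k + (j : ZMod n)) = ∑ i : ZMod n, g i := by
  refine Finset.sum_nbij' (i := fun j => k + (j : ZMod n)) (j := fun i => (i - k).val)
    ?_ ?_ ?_ ?_ ?_
  · intro a _; exact Finset.mem_univ _
  · intro a _; exact Finset.mem_range.mpr (ZMod.val_lt _)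
  · intro a ha
    show (k + (a : ZMod n) - k).val = a
    rw [add_sub_cancel_left, ZMod.val_natCast_of_lt (Finset.mem_range.mp ha)]
  · intro a _
    show k + (((a - k).val : ℕ) : ZMod n) = a
    rw [ZMod.natCast_zmod_val]; ring
  · intro a _; rfl

private lemma cycle_bound (n : ℕ) [NeZero n] (hodd : Odd n) (x : ZMod n → ℝ) (k : ZMod n) :
    |2 * x k - 1| ≤ ∑ i : ZMod n, |x i + x (i + 1) - 1| := by
  set y : ℕ → ℝ := fun j => x (k + (j : ZMod n)) with hy
  have h1 : (2 * x k - 1) = ∑ j ∈ Finset.range n, (-1:ℝ)^j * (y j + y (j+1) - 1) := by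
    rw [tele_aux, hodd.neg_one_pow]
    have hn : y n = x k := by simp [hy]
    have h0 : y 0 = x k := by simp [hy]
    rw [hn, h0]; ring
  rw [h1]
  calc |∑ j ∈ Finset.range n, (-1:ℝ)^j * (y j + y (j+1) - 1)|
      ≤ ∑ j ∈ Finset.range n, |(-1:ℝ)^j * (y j + y (j+1) - 1)| :=
        Finset.abs_sum_le_sum_abs _ _
    _ = ∑ j ∈ Finset.range n, |y j + y (j+1) - 1| := by
        apply Finset.sum_congr rfl; intro j _
        rw [abs_mul, abs_pow, abs_neg, abs_one, one_pow, one_mul]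
    _ = ∑ i : ZMod n, |x i + x (i + 1) - 1| := by
        rw [← zmod_sum_eq_range n k (fun i => |x i + x (i+1) - 1|)]
        apply Finset.sum_congr rfl; intro j _
        simp only [hy]
        push_cast
        ring_nf

private lemma edge_bound (c00 c01 c10 c11 xl yl : ℝ) (h00 : 0 ≤ c00) (h11 : 0 ≤ c11)
    (hsum : c00 + c01 + c10 + c11 = 1) (hx : c10 + c11 = xl) (hy : c01 + c11 = yl) :
    c01 + c10 ≤ 1 - |xl + yl - 1| := by
  have h : |c11 - c00| ≤ c11 + c00 := abs_le.mpr ⟨by linarith, by linarith⟩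
  have hxy : xl + yl - 1 = c11 - c00 := by linarith
  rw [hxy]; linarith

private lemma pred_bound {Λ : Type*} [Fintype Λ] (ξ : Bool → Λ → ℝ) (ν : Λ → ℝ)
    (hν0 : ∀ l, 0 ≤ ν l) (hν1 : ∑ l, ν l = 1)
    (hnorm : ∀ l, ξ false l + ξ true l = 1) :
    predictability ξ ν ≤ ∑ l, |2 * ξ true l - 1| * ν l := by
  have hadd : (∑ l, ξ false l * ν l) + (∑ l, ξ true l * ν l) = 1 := by
    rw [← Finset.sum_add_distrib]
    calc ∑ l, (ξ false l * ν l + ξ true l * ν l) = ∑ l, ν l := by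
          apply Finset.sum_congr rfl; intro l _
          rw [← add_mul, hnorm l, one_mul]
      _ = 1 := hν1
  set t := ∑ l, ξ true l * ν l with ht
  have hmax : 2 * max (∑ l, ξ false l * ν l) t - 1 = |2 * t - 1| := by
    have he : (∑ l, ξ false l * ν l) = 1 - t := by linarith
    rw [he]
    rcases le_total (1 - t) t with h | h
    · rw [max_eq_right h, abs_of_nonneg (by linarith)]
    · rw [max_eq_left h, abs_of_nonpos (by linarith)]; ring
  unfold predictability
  rw [hmax]
  have h2 : 2 * t - 1 = ∑ l, (2 * ξ true l - 1) * ν l := by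
    rw [Finset.sum_congr rfl (fun l _ => by ring : ∀ l ∈ Finset.univ,
      (2 * ξ true l - 1) * ν l = 2 * (ξ true l * ν l) - ν l)]
    rw [Finset.sum_sub_distrib, ← Finset.mul_sum, hν1, ht]
  rw [h2]
  calc |∑ l, (2 * ξ true l - 1) * ν l| ≤ ∑ l, |(2 * ξ true l - 1) * ν l| :=
        Finset.abs_sum_le_sum_abs _ _
    _ = ∑ l, |2 * ξ true l - 1| * ν l := by
        apply Finset.sum_congr rfl; intro l _
        rw [abs_mul, abs_of_nonneg (hν0 l)]

/-- **The operational noncontextuality inequality for odd n-cycle scenarios** (the case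
`n = 3` is Specker's scenario): in any measurement- and preparation-noncontextual ontological
model, `p(anti|M_*,P_*) + p(anti|M'_*,P_*^⊥) ≤ 2(1 − η_ave/n)`. -/
theorem odd_ncycle_noncontextuality_inequality
    (n : ℕ) [NeZero n] (hodd : Odd n) (hn : 3 ≤ n)
    (Λ : Type*) [Fintype Λ]
    (ξ : ZMod n → Bool → Λ → ℝ)
    (hξ01 : ∀ i a l, ξ i a l ∈ Set.Icc (0 : ℝ) 1)
    (hξnorm : ∀ i l, ξ i false l + ξ i true l = 1)
    (ζ ζ' : ZMod n → Bool → Bool → Λ → ℝ)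
    (hζ0 : ∀ i a b l, 0 ≤ ζ i a b l)
    (hζ'0 : ∀ i a b l, 0 ≤ ζ' i a b l)
    (hζnorm : ∀ i l, ∑ a : Bool, ∑ b : Bool, ζ i a b l = 1)
    (hζ'norm : ∀ i l, ∑ a : Bool, ∑ b : Bool, ζ' i a b l = 1)
    (hζmarg₁ : ∀ i a l, ∑ b : Bool, ζ i a b l = ξ i a l)
    (hζmarg₂ : ∀ i b l, ∑ a : Bool, ζ i a b l = ξ (i + 1) b l)
    (hζ'marg₁ : ∀ i a l, ∑ b : Bool, ζ' i a b l = ξ i a l)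
    (hζ'marg₂ : ∀ i b l, ∑ a : Bool, ζ' i a b l = ξ (i + 1) b l)
    (μstar μstarPerp : Λ → ℝ) (μ μPerp : ZMod n → Λ → ℝ)
    (hμstar : (∀ l, 0 ≤ μstar l) ∧ ∑ l, μstar l = 1)
    (hμstarPerp : (∀ l, 0 ≤ μstarPerp l) ∧ ∑ l, μstarPerp l = 1)
    (hμ : ∀ i, (∀ l, 0 ≤ μ i l) ∧ ∑ l, μ i l = 1)
    (hμPerp : ∀ i, (∀ l, 0 ≤ μPerp i l) ∧ ∑ l, μPerp i l = 1)
    (hpnc : ∀ i l, (μstar l + μstarPerp l) / 2 = (μ i l + μPerp i l) / 2) :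
    pAnti n ζ μstar + pAnti n ζ' μstarPerp ≤
      2 * (1 - ((1 / (2 * (n : ℝ))) *
        ∑ i : ZMod n, (predictability (ξ i) (μ i) + predictability (ξ i) (μPerp i))) / n) := by
  have hnpos : (0:ℝ) < n := by
    have := NeZero.pos n
    exact_mod_cast this
  -- s l = sum over edges of |x_i + x_{i+1} - 1|
  set s : Λ → ℝ := fun l => ∑ i : ZMod n, |ξ i true l + ξ (i+1) true l - 1| with hs
  have hs0 : ∀ l, 0 ≤ s l := fun l => Finset.sum_nonneg fun i _ => abs_nonneg _
  have hcard : (Fintype.card (ZMod n) : ℝ) = n := by rw [ZMod.card]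
  -- pointwise edge bound for any admissible joint response function
  have hanti : ∀ (ζ : ZMod n → Bool → Bool → Λ → ℝ),
      (∀ i a b l, 0 ≤ ζ i a b l) → (∀ i l, ∑ a : Bool, ∑ b : Bool, ζ i a b l = 1) →
      (∀ i a l, ∑ b : Bool, ζ i a b l = ξ i a l) →
      (∀ i b l, ∑ a : Bool, ζ i a b l = ξ (i+1) b l) →
      ∀ i l, ζ i false true l + ζ i true false l ≤ 1 - |ξ i true l + ξ (i+1) true l - 1| := by
    intro ζ h0 hnorm hm1 hm2 i l
    have e1 := hnorm i l
    have e2 := hm1 i true l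
    have e3 := hm2 i true l
    simp only [Fintype.sum_bool] at e1 e2 e3
    exact edge_bound (ζ i false false l) (ζ i false true l) (ζ i true false l)
      (ζ i true true l) _ _ (h0 _ _ _ _) (h0 _ _ _ _) (by linarith) (by linarith) (by linarith)
  -- key bound for pAnti of each joint response function
  have hkey : ∀ (ζ : ZMod n → Bool → Bool → Λ → ℝ) (ν : Λ → ℝ),
      (∀ i a b l, 0 ≤ ζ i a b l) → (∀ i l, ∑ a : Bool, ∑ b : Bool, ζ i a b l = 1) →
      (∀ i a l, ∑ b : Bool, ζ i a b l = ξ i a l) →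
      (∀ i b l, ∑ a : Bool, ζ i a b l = ξ (i+1) b l) →
      (∀ l, 0 ≤ ν l) → (∑ l, ν l = 1) →
      pAnti n ζ ν ≤ (1/(n:ℝ)) * ((n:ℝ) - ∑ l, s l * ν l) := by
    intro ζ ν h0 hnorm hm1 hm2 hν0 hν1
    unfold pAnti
    have hswap : ∑ i : ZMod n, ∑ l, (ζ i false true l + ζ i true false l) * ν l
        = ∑ l, (∑ i : ZMod n, (ζ i false true l + ζ i true false l)) * ν l := by
      rw [Finset.sum_comm]
      exact Finset.sum_congr rfl fun l _ => (Finset.sum_mul _ _ _).symm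
    rw [hswap]
    apply mul_le_mul_of_nonneg_left _ (by positivity : (0:ℝ) ≤ 1/(n:ℝ))
    have hsub : ∀ l, (∑ i : ZMod n, (ζ i false true l + ζ i true false l)) ≤ (n:ℝ) - s l := by
      intro l
      calc (∑ i : ZMod n, (ζ i false true l + ζ i true false l))
          ≤ ∑ i : ZMod n, (1 - |ξ i true l + ξ (i+1) true l - 1|) :=
            Finset.sum_le_sum fun i _ => hanti ζ h0 hnorm hm1 hm2 i l
        _ = (n:ℝ) - s l := by
            rw [Finset.sum_sub_distrib, Finset.sum_const, hs]
            simp [hcard]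
    calc ∑ l, (∑ i : ZMod n, (ζ i false true l + ζ i true false l)) * ν l
        ≤ ∑ l, ((n:ℝ) - s l) * ν l :=
          Finset.sum_le_sum fun l _ => mul_le_mul_of_nonneg_right (hsub l) (hν0 l)
      _ = (n:ℝ) * (∑ l, ν l) - ∑ l, s l * ν l := by
          rw [Finset.sum_congr rfl (fun l _ => by ring : ∀ l ∈ Finset.univ,
            ((n:ℝ) - s l) * ν l = (n:ℝ) * ν l - s l * ν l)]
          rw [Finset.sum_sub_distrib, ← Finset.mul_sum]
      _ = (n:ℝ) - ∑ l, s l * ν l := by rw [hν1, mul_one]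
  have key1 := hkey ζ μstar hζ0 hζnorm hζmarg₁ hζmarg₂ hμstar.1 hμstar.2
  have key2 := hkey ζ' μstarPerp hζ'0 hζ'norm hζ'marg₁ hζ'marg₂ hμstarPerp.1 hμstarPerp.2
  -- bound on the predictability sum
  set T : ℝ := ∑ i : ZMod n, (predictability (ξ i) (μ i) + predictability (ξ i) (μPerp i)) with hT
  set S : ℝ := ∑ l, s l * (μstar l + μstarPerp l) with hS
  have hTS : T ≤ (n:ℝ) * S := by
    have hstep : ∀ i : ZMod n,
        predictability (ξ i) (μ i) + predictability (ξ i) (μPerp i)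
          ≤ ∑ l, |2 * ξ i true l - 1| * (μstar l + μstarPerp l) := by
      intro i
      have b1 := pred_bound (ξ i) (μ i) (hμ i).1 (hμ i).2 (fun l => hξnorm i l)
      have b2 := pred_bound (ξ i) (μPerp i) (hμPerp i).1 (hμPerp i).2 (fun l => hξnorm i l)
      have : (∑ l, |2 * ξ i true l - 1| * μ i l) + (∑ l, |2 * ξ i true l - 1| * μPerp i l)
          = ∑ l, |2 * ξ i true l - 1| * (μstar l + μstarPerp l) := by
        rw [← Finset.sum_add_distrib]
        apply Finset.sum_congr rfl; intro l _
        have hply : μ i l + μPerp i l = μstar l + μstarPerp l := by linarith [hpnc i l]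
        rw [← hply]; ring
      linarith
    calc T ≤ ∑ i : ZMod n, ∑ l, |2 * ξ i true l - 1| * (μstar l + μstarPerp l) :=
          Finset.sum_le_sum fun i _ => hstep i
      _ = ∑ l, (∑ i : ZMod n, |2 * ξ i true l - 1|) * (μstar l + μstarPerp l) := by
          rw [Finset.sum_comm]
          exact Finset.sum_congr rfl fun l _ => (Finset.sum_mul _ _ _).symm
      _ ≤ ∑ l, ((n:ℝ) * s l) * (μstar l + μstarPerp l) := by
          apply Finset.sum_le_sum; intro l _
          apply mul_le_mul_of_nonneg_right _ (by
            have := hμstar.1 l; have := hμstarPerp.1 l; linarith)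
          calc (∑ i : ZMod n, |2 * ξ i true l - 1|)
              ≤ ∑ _i : ZMod n, s l :=
                Finset.sum_le_sum fun i _ =>
                  cycle_bound n hodd (fun k => ξ k true l) i
            _ = (n:ℝ) * s l := by rw [Finset.sum_const]; simp [hcard]
      _ = (n:ℝ) * S := by
          rw [hS, Finset.mul_sum]
          exact Finset.sum_congr rfl fun l _ => by ring
  -- final algebra
  have hSsplit : (∑ l, s l * μstar l) + (∑ l, s l * μstarPerp l) = S := by
    rw [hS, ← Finset.sum_add_distrib]
    exact Finset.sum_congr rfl fun l _ => by ring
  have hrhs : 2 * (1 - ((1 / (2 * (n : ℝ))) * T) / n) = 2 - T / (n:ℝ)^2 := by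
    field_simp
  rw [hrhs]
  have hdiv : T / (n:ℝ)^2 ≤ S / (n:ℝ) := by
    rw [div_le_div_iff₀ (by positivity) hnpos]
    nlinarith
  have hlhs : pAnti n ζ μstar + pAnti n ζ' μstarPerp ≤ 2 - S / (n:ℝ) := by
    have e1 : (1/(n:ℝ)) * ((n:ℝ) - ∑ l, s l * μstar l)
        + (1/(n:ℝ)) * ((n:ℝ) - ∑ l, s l * μstarPerp l) = 2 - S / (n:ℝ) := by
      rw [← hSsplit]
      field_simp
      ring
    linarith
  linarith
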